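/- Let c_1, ..., c_n be real numbers (cosines of arrival directions) such that 1, c_1, ..., c_n are linearly independent over ℚ, and let t ≤ n. Then for every ε > 0 there exist positive integers d_1, ..., d_t such that for all ℓ ∈ {1, ..., t} and all m ∈ {1, ..., n}, |κ(ℓ, m) − δ_{ℓm}| < ε, where κ(ℓ, m) := (1 + exp(2πi·d_ℓ·c_m))/2 ∈ ℂ and δ_{ℓm} is Kronecker's delta. In particular, the t×t complex matrix M with entries M_{ℓ,m} = κ(ℓ, m), 1 ≤ ℓ, m ≤ t, satisfies M = I + D with every entry of D of absolute value less than ε, while |κ(ℓ, m)| < ε for all m > t. -/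

import Mathlib

/-- Complex response of a two-antenna beamformer with combining weights
`(1,1)/√2`, reference antenna and one antenna at integer separation `d`
wavelengths, to a far-field source whose direction has cosine `c`. -/
noncomputable def kappa (d : ℕ) (c : ℝ) : ℂ :=
  (1 + Complex.exp (2 * Real.pi * Complex.I * d * c)) / 2

open Finset Filter

lemma weyl_exists (ι : Type*) [Fintype ι] [DecidableEq ι] (a : ι → ℂ) (z : ι → ℂ)
    (hz : ∀ k, ‖z k‖ = 1) (D : Finset ι) (hD : ∀ k, k ∈ D ↔ z k = 1)
    (P : ℝ) (hP : 0 < P) (hdiag : ∑ k ∈ D, a k = (P : ℂ)) :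
    ∃ d : ℕ, 0 < d ∧ P / 2 < (∑ k, a k * z k ^ d).re := by
  set C : ℝ := ∑ k ∈ Dᶜ, 2 * ‖a k‖ / ‖z k - 1‖ with hC
  have hC0 : 0 ≤ C := Finset.sum_nonneg fun k _ => by positivity
  obtain ⟨N, hN⟩ := exists_nat_gt (C / (P / 2))
  have hNpos : 0 < N := by
    have h0 : (0:ℝ) ≤ C / (P/2) := by positivity
    exact_mod_cast (by exact_mod_cast h0.trans_lt hN : (0:ℝ) < N)
  have hCN : C < N * (P / 2) := by
    rw [div_lt_iff₀ (by positivity)] at hN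
    linarith [hN]
  have key : (N : ℝ) * P - C ≤ ∑ d ∈ range N, (∑ k, a k * z k ^ (d + 1)).re := by
    have hswap : ∑ d ∈ range N, (∑ k, a k * z k ^ (d+1)) =
        ∑ k, a k * (∑ d ∈ range N, z k ^ (d+1)) := by
      rw [Finset.sum_comm]
      exact Finset.sum_congr rfl fun k _ => by rw [Finset.mul_sum]
    have hsplit : ∑ k, a k * (∑ d ∈ range N, z k ^ (d+1)) =
        (∑ k ∈ D, a k * (∑ d ∈ range N, z k ^ (d+1))) +
        (∑ k ∈ Dᶜ, a k * (∑ d ∈ range N, z k ^ (d+1))) :=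
      (Finset.sum_add_sum_compl D _).symm
    have hDpart : (∑ k ∈ D, a k * (∑ d ∈ range N, z k ^ (d+1))) = (N : ℂ) * P := by
      have h : ∀ k ∈ D, a k * (∑ d ∈ range N, z k ^ (d+1)) = (N:ℂ) * a k := by
        intro k hk
        rw [(hD k).1 hk]
        simp [mul_comm]
      rw [Finset.sum_congr rfl h, ← Finset.mul_sum, hdiag]
    have hEbound : ‖∑ k ∈ Dᶜ, a k * (∑ d ∈ range N, z k ^ (d+1))‖ ≤ C := by
      refine (norm_sum_le _ _).trans ?_
      refine Finset.sum_le_sum fun k hk => ?_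
      have hzk : z k ≠ 1 := by
        intro h; exact (Finset.mem_compl.1 hk) ((hD k).2 h)
      have h2 : 0 < ‖z k - 1‖ := by
        rw [norm_pos_iff]
        exact sub_ne_zero.2 hzk
      have hgeom : (∑ d ∈ range N, z k ^ (d+1)) = (∑ d ∈ range N, z k ^ d) * z k := by
        rw [Finset.sum_mul]
        exact Finset.sum_congr rfl fun d _ => (pow_succ _ _)
      rw [norm_mul, hgeom, norm_mul, geom_sum_eq hzk, norm_div, hz k, mul_one]
      have h1 : ‖z k ^ N - 1‖ ≤ 2 := by
        calc ‖z k ^ N - 1‖ ≤ ‖z k ^ N‖ + ‖(1:ℂ)‖ :=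
          (norm_sub_le _ _)
        _ = 2 := by rw [norm_pow, hz k]; norm_num
      calc ‖a k‖ * (‖z k ^ N - 1‖ / ‖z k - 1‖)
          ≤ ‖a k‖ * (2 / ‖z k - 1‖) := by gcongr
        _ = 2 * ‖a k‖ / ‖z k - 1‖ := by ring
    have hre : (∑ d ∈ range N, (∑ k, a k * z k ^ (d+1)).re) =
        (∑ d ∈ range N, (∑ k, a k * z k ^ (d+1))).re := by
      rw [Complex.re_sum]
    rw [hre, hswap, hsplit, hDpart]
    have : ((N:ℂ) * P + ∑ k ∈ Dᶜ, a k * (∑ d ∈ range N, z k ^ (d+1))).re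
        = N * P + (∑ k ∈ Dᶜ, a k * (∑ d ∈ range N, z k ^ (d+1))).re := by
      simp
    rw [this]
    have := neg_abs_le (∑ k ∈ Dᶜ, a k * (∑ d ∈ range N, z k ^ (d+1))).re
    have habs := Complex.abs_re_le_norm (∑ k ∈ Dᶜ, a k * (∑ d ∈ range N, z k ^ (d+1)))
    have := abs_le.1 (habs.trans hEbound) |>.1
    linarith
  by_contra hcon
  push_neg at hcon
  have hall : ∀ d ∈ range N, (∑ k, a k * z k ^ (d+1)).re ≤ P / 2 := by
    intro d _
    exact hcon (d+1) (Nat.succ_pos d)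
  have hsum : (∑ d ∈ range N, (∑ k, a k * z k ^ (d+1)).re) ≤ N * (P/2) := by
    calc (∑ d ∈ range N, (∑ k, a k * z k ^ (d+1)).re) ≤ ∑ d ∈ range N, P/2 :=
      Finset.sum_le_sum hall
    _ = N * (P/2) := by rw [Finset.sum_const, Finset.card_range]; simp [nsmul_eq_mul]
  nlinarith [key, hsum, hCN]

lemma exists_K (n : ℕ) {r : ℝ} (h0 : 0 ≤ r) (h1 : r < 1) :
    ∃ K : ℕ, ((K:ℝ) + 1) ^ n * r ^ K < 1/2 := by
  rcases eq_or_lt_of_le h0 with h|h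
  · exact ⟨1, by rw [← h]; norm_num⟩
  · have hsum : Summable (fun k : ℕ => ‖((k:ℝ)) ^ n * r ^ k‖) :=
      summable_norm_pow_mul_geometric_of_norm_lt_one n (by rwa [Real.norm_eq_abs, abs_of_nonneg h0])
    have htend : Tendsto (fun k : ℕ => ((k:ℝ)) ^ n * r ^ k) atTop (nhds 0) :=
      (Summable.of_norm hsum).tendsto_atTop_zero
    have h2 : Tendsto (fun K : ℕ => ((K:ℝ) + 1) ^ n * r ^ (K+1)) atTop (nhds 0) := by
      have h3 := htend.comp (tendsto_add_atTop_nat 1)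
      have : (fun K : ℕ => ((K:ℝ) + 1) ^ n * r ^ (K+1)) =
          ((fun k : ℕ => ((k:ℝ)) ^ n * r ^ k) ∘ fun a => a + 1) := by
        funext K; simp [Function.comp]
      rwa [this]
    have hev : ∀ᶠ K : ℕ in atTop, ((K:ℝ) + 1) ^ n * r ^ (K+1) < r/2 :=
      h2.eventually (eventually_lt_nhds (show (0:ℝ) < r/2 by linarith))
    obtain ⟨K, hK⟩ := hev.exists
    refine ⟨K, ?_⟩
    rw [show ((K:ℝ)+1)^n * r^(K+1) = (((K:ℝ)+1)^n * r^K) * r by ring] at hK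
    exact lt_of_mul_lt_mul_right (by linarith : (((K:ℝ)+1)^n * r^K) * r < (1/2) * r) h.le

lemma factor_eq (s C : ℝ) (u : ℂ) (hs : s^2 = 1) (huv : u * (starRingEnd ℂ) u = 1)
    (hre : u + (starRingEnd ℂ) u = 2*(C:ℂ)) :
    (((1 + s*C)/2 : ℝ) : ℂ) = ((1+s*u)/2) * ((1+s*(starRingEnd ℂ) u)/2) := by
  have hs' : ((s:ℂ))^2 = 1 := by exact_mod_cast hs
  push_cast
  linear_combination (-(s:ℂ)/4) * hre + (-((s:ℂ))^2/4) * huv + (-(1:ℂ)/4) * hs'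


lemma binom_expand (K : ℕ) (s : ℝ) (u : ℂ) :
    ((1+(s:ℂ)*u)/2)^K = ∑ j : Fin (K+1), (((K.choose j : ℝ) * s^(j:ℕ) / 2^K : ℝ) : ℂ) * u^(j:ℕ) := by
  rw [div_pow, add_comm, add_pow]
  rw [← Finset.sum_range (fun j => (((K.choose j : ℝ) * s^j / 2^K : ℝ):ℂ) * u^j)]
  rw [Finset.sum_div]
  refine Finset.sum_congr rfl fun j _ => ?_
  push_cast
  ring

lemma expand_prod (n K : ℕ) (s : Fin n → ℝ) (v : Fin n → ℂ) (d : ℕ) :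
    ∏ m, ((1 + (s m:ℂ) * (v m)^d)/2)^K
      = ∑ p : Fin n → Fin (K+1),
          ((∏ m, ((K.choose (p m) : ℝ) * s m ^ ((p m):ℕ) / 2^K) : ℝ):ℂ)
            * (∏ m, (v m)^((p m):ℕ))^d := by
  have h1 : ∀ m : Fin n, ((1 + (s m:ℂ) * (v m)^d)/2)^K
      = ∑ j : Fin (K+1), (((K.choose j : ℝ) * s m ^(j:ℕ) / 2^K : ℝ) : ℂ) * ((v m)^(j:ℕ))^d := by
    intro m
    rw [binom_expand K (s m) ((v m)^d)]
    exact Finset.sum_congr rfl fun j _ => by rw [← pow_mul, mul_comm d (j:ℕ), pow_mul]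
  calc ∏ m, ((1 + (s m:ℂ) * (v m)^d)/2)^K
      = ∏ m, ∑ j : Fin (K+1), (((K.choose j : ℝ) * s m ^(j:ℕ) / 2^K : ℝ) : ℂ) * ((v m)^(j:ℕ))^d :=
        Finset.prod_congr rfl fun m _ => h1 m
    _ = ∑ p ∈ Fintype.piFinset (fun _ : Fin n => (univ : Finset (Fin (K+1)))),
          ∏ m, (((K.choose (p m) : ℝ) * s m ^((p m):ℕ) / 2^K : ℝ) : ℂ) * ((v m)^((p m):ℕ))^d :=
        Finset.prod_univ_sum _ _
    _ = ∑ p : Fin n → Fin (K+1),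
          ∏ m, (((K.choose (p m) : ℝ) * s m ^((p m):ℕ) / 2^K : ℝ) : ℂ) * ((v m)^((p m):ℕ))^d := by
        rw [Fintype.piFinset_univ]
    _ = _ := by
        refine Finset.sum_congr rfl fun p _ => ?_
        rw [Finset.prod_mul_distrib, Finset.prod_pow]
        push_cast
        ring

set_option maxHeartbeats 1000000 in
lemma key_step (n : ℕ) (c : Fin n → ℝ)
    (hind : ∀ (q₀ : ℚ) (q : Fin n → ℚ),
      (q₀ : ℝ) + ∑ k, (q k : ℝ) * c k = 0 → q₀ = 0 ∧ ∀ k, q k = 0)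
    (s : Fin n → ℝ) (hs : ∀ m, s m = 1 ∨ s m = -1)
    (ε : ℝ) (hε0 : 0 < ε) (hε1 : ε ≤ 1/2) :
    ∃ d : ℕ, 0 < d ∧ ∀ m, 1 - ε^2 <
        (1 + s m * Real.cos ((d:ℝ) * (2 * Real.pi * c m))) / 2 := by
  have hr0 : (0:ℝ) ≤ 1 - ε^2 := by nlinarith
  have hr1 : 1 - ε^2 < 1 := by nlinarith
  obtain ⟨K, hK⟩ := exists_K n hr0 hr1
  set r : ℝ := 1 - ε^2 with hrdef
  set θ : Fin n → ℝ := fun m => 2 * Real.pi * c m with hθ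
  set w : Fin n → ℂ := fun m => Complex.exp ((θ m : ℝ) * Complex.I) with hw
  set coef : Fin n → Fin (K+1) → ℝ :=
    fun m j => (K.choose j : ℝ) * s m ^ (j:ℕ) / 2^K with hcoef
  set b : (Fin n → Fin (K+1)) → ℝ := fun p => ∏ m, coef m (p m) with hb
  set W : (Fin n → Fin (K+1)) → ℂ := fun p => ∏ m, w m ^ ((p m) : ℕ) with hWdef
  set A : (Fin n → Fin (K+1)) → ℝ := fun p => ∑ m, ((p m : ℕ) : ℝ) * θ m with hA
  set a : ((Fin n → Fin (K+1)) × (Fin n → Fin (K+1))) → ℂ :=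
    fun k => ((b k.1 * b k.2 : ℝ) : ℂ) with ha
  set z : ((Fin n → Fin (K+1)) × (Fin n → Fin (K+1))) → ℂ :=
    fun k => W k.1 * (starRingEnd ℂ) (W k.2) with hz
  -- basic facts
  have hWA : ∀ p, W p = Complex.exp (((A p : ℝ)) * Complex.I) := by
    intro p
    have h1 : W p = ∏ m, Complex.exp (((p m : ℕ):ℂ) * ((θ m : ℝ) * Complex.I)) :=
      Finset.prod_congr rfl fun m _ => (Complex.exp_nat_mul _ _)|>.symm
    rw [h1, ← Complex.exp_sum]
    congr 1
    rw [hA]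
    push_cast
    rw [Finset.sum_mul]
    exact Finset.sum_congr rfl fun m _ => by ring
  have habsW : ∀ p, ‖W p‖ = 1 := by
    intro p; rw [hWA]; exact Complex.norm_exp_ofReal_mul_I _
  have hz1 : ∀ k, ‖z k‖ = 1 := by
    intro k
    rw [hz]
    simp only [norm_mul, Complex.norm_conj]
    rw [habsW, habsW, mul_one]
  have hzexp : ∀ p q, z (p, q) = Complex.exp (((A p - A q : ℝ)) * Complex.I) := by
    intro p q
    have hconjW : (starRingEnd ℂ) (W q) = Complex.exp (((-A q : ℝ)) * Complex.I) := by
      rw [hWA, ← Complex.exp_conj]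
      congr 1
      simp only [map_mul, Complex.conj_ofReal, Complex.conj_I]
      push_cast
      ring
    simp only [hz]
    rw [hWA, hconjW, ← Complex.exp_add]
    congr 1
    push_cast
    ring
  have hz_iff : ∀ p q, z (p, q) = 1 ↔ p = q := by
    intro p q
    constructor
    · intro h
      rw [hzexp, Complex.exp_eq_one_iff] at h
      obtain ⟨k, hk⟩ := h
      have hk' : ((A p - A q : ℝ):ℂ) * Complex.I = ((2 * Real.pi * k : ℝ):ℂ) * Complex.I := by
        rw [hk]; push_cast; ring
      have hreal : A p - A q = 2 * Real.pi * k := by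
        have := mul_right_cancel₀ Complex.I_ne_zero hk'
        exact_mod_cast this
      have hAA : A p - A q = 2 * Real.pi * ∑ m, (((p m : ℕ):ℝ) - ((q m : ℕ):ℝ)) * c m := by
        rw [hA]
        simp only [hθ]
        rw [Finset.mul_sum, ← Finset.sum_sub_distrib]
        exact Finset.sum_congr rfl fun m _ => by ring
      have h2pi : (2 * Real.pi : ℝ) ≠ 0 := by positivity
      have hsum : ∑ m, (((p m : ℕ):ℝ) - ((q m : ℕ):ℝ)) * c m = k := by
        apply mul_left_cancel₀ h2pi
        rw [← hAA, hreal]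
      have hind' := hind (-(k:ℚ)) (fun m => ((p m : ℕ):ℚ) - ((q m : ℕ):ℚ)) ?_
      · funext m
        have h3 := hind'.2 m
        have h4 : ((p m : ℕ):ℚ) = ((q m : ℕ):ℚ) := by linarith [h3]
        have h5 : (p m : ℕ) = (q m : ℕ) := by exact_mod_cast h4
        exact Fin.ext h5
      · push_cast
        rw [hsum]
        ring
    · rintro rfl
      simp only [hz]
      rw [Complex.mul_conj, Complex.normSq_eq_norm_sq, habsW]
      norm_num
  -- the trigonometric polynomial identity
  have hSd : ∀ d : ℕ,
      ((∏ m, ((1 + s m * Real.cos ((d:ℝ) * θ m)) / 2)^K : ℝ) : ℂ) = ∑ k, a k * z k ^ d := by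
    intro d
    have hm : ∀ m : Fin n, (((1 + s m * Real.cos ((d:ℝ) * θ m)) / 2 : ℝ) : ℂ)
        = ((1 + (s m:ℂ) * (w m)^d)/2) * ((1 + (s m:ℂ) * (starRingEnd ℂ) ((w m)^d))/2) := by
      intro m
      have hu : (w m)^d = Complex.exp ((((d:ℝ) * θ m : ℝ)) * Complex.I) := by
        rw [hw, ← Complex.exp_nat_mul]
        congr 1
        push_cast
        ring
      have habs : ‖(w m)^d‖ = 1 := by
        rw [hu]; exact Complex.norm_exp_ofReal_mul_I _
      have hs2 : (s m)^2 = 1 := by rcases hs m with h|h <;> rw [h] <;> norm_num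
      have huv : (w m)^d * (starRingEnd ℂ) ((w m)^d) = 1 := by
        rw [Complex.mul_conj, Complex.normSq_eq_norm_sq, habs]; norm_num
      have hre : (w m)^d + (starRingEnd ℂ) ((w m)^d)
          = 2 * ((Real.cos ((d:ℝ) * θ m) : ℝ):ℂ) := by
        rw [Complex.add_conj, hu, Complex.exp_ofReal_mul_I_re]
        push_cast
        ring
      exact factor_eq (s m) _ _ hs2 huv hre
    calc ((∏ m, ((1 + s m * Real.cos ((d:ℝ) * θ m)) / 2)^K : ℝ) : ℂ)
        = ∏ m, (((1 + s m * Real.cos ((d:ℝ) * θ m)) / 2 : ℝ) : ℂ)^K := by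
          push_cast; rfl
      _ = ∏ m, (((1 + (s m:ℂ) * (w m)^d)/2)^K
            * ((1 + (s m:ℂ) * (starRingEnd ℂ) ((w m)^d))/2)^K) := by
          refine Finset.prod_congr rfl fun m _ => ?_
          rw [hm m, mul_pow]
      _ = (∏ m, ((1 + (s m:ℂ) * (w m)^d)/2)^K)
            * (∏ m, ((1 + (s m:ℂ) * ((starRingEnd ℂ) (w m))^d)/2)^K) := by
          rw [Finset.prod_mul_distrib]
          congr 1
          exact Finset.prod_congr rfl fun m _ => by rw [map_pow]
      _ = (∑ p : Fin n → Fin (K+1), ((b p : ℝ):ℂ) * (W p)^d)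
            * (∑ q : Fin n → Fin (K+1), ((b q : ℝ):ℂ) * ((starRingEnd ℂ) (W q))^d) := by
          rw [expand_prod n K s w d, expand_prod n K s (fun m => (starRingEnd ℂ) (w m)) d]
          congr 1
          refine Finset.sum_congr rfl fun q _ => ?_
          congr 1
          rw [map_prod (starRingEnd ℂ) (fun m => w m ^ ((q m):ℕ)) Finset.univ]
          exact congrArg (· ^ d)
            (Finset.prod_congr rfl fun m _ => (map_pow (starRingEnd ℂ) (w m) ((q m):ℕ)).symm)
      _ = ∑ k, a k * z k ^ d := by
          rw [Finset.sum_mul_sum, Fintype.sum_prod_type]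
          refine Finset.sum_congr rfl fun p _ => Finset.sum_congr rfl fun q _ => ?_
          simp only [ha, hz]
          push_cast
          rw [mul_pow]
          ring
  -- diagonal coefficient sum
  set Tr : ℝ := ∑ j ∈ range (K+1), ((K.choose j : ℝ))^2 with hTrdef
  have hTrpos : 0 < Tr := by
    apply Finset.sum_pos
    · intro j hj
      have hj' : 0 < K.choose j := Nat.choose_pos (Nat.lt_succ_iff.1 (Finset.mem_range.1 hj))
      positivity
    · exact ⟨0, Finset.mem_range.2 (Nat.succ_pos K)⟩
  set P : ℝ := (Tr / 4^K)^n with hPdef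
  have hPpos : 0 < P := pow_pos (div_pos hTrpos (by positivity)) n
  set D : Finset _ := Finset.univ.filter
    (fun k : (Fin n → Fin (K+1)) × (Fin n → Fin (K+1)) => k.1 = k.2) with hDdef
  have hDmem : ∀ k, k ∈ D ↔ z k = 1 := by
    intro k
    rw [hDdef, Finset.mem_filter]
    constructor
    · rintro ⟨-, h⟩
      exact (hz_iff k.1 k.2).2 h
    · intro h
      exact ⟨Finset.mem_univ _, (hz_iff k.1 k.2).1 h⟩
  have h2k : ((2:ℝ)^K)^2 = 4^K := by
    rw [← pow_mul, mul_comm, pow_mul]; norm_num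
  have hdiag : ∑ k ∈ D, a k = (P : ℂ) := by
    rw [hDdef, Finset.sum_filter, Fintype.sum_prod_type]
    have hinner : ∀ p : Fin n → Fin (K+1), (∑ q, if p = q then a (p, q) else 0) = a (p,p) := by
      intro p
      rw [Finset.sum_ite_eq Finset.univ p (fun q => a (p,q))]
      simp
    rw [Finset.sum_congr rfl (fun p _ => hinner p)]
    have h1 : ∀ p : Fin n → Fin (K+1), a (p,p) = ((∏ m, (coef m (p m))^2 : ℝ) : ℂ) := by
      intro p
      simp only [ha, hb]
      congr 1
      rw [← Finset.prod_mul_distrib]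
      exact Finset.prod_congr rfl fun m _ => (sq (coef m (p m))).symm
    rw [Finset.sum_congr rfl (fun p _ => h1 p), ← Complex.ofReal_sum]
    congr 1
    have hcoefsq : ∀ (m : Fin n) (j : Fin (K+1)), (coef m j)^2 = ((K.choose j:ℝ))^2 / 4^K := by
      intro m j
      have hsj : (s m ^ ((j:ℕ)))^2 = 1 := by
        rcases hs m with h|h <;> rw [h]
        · simp
        · rw [← pow_mul, mul_comm, pow_mul]; norm_num
      rw [hcoef]
      rw [div_pow, mul_pow, hsj, mul_one, h2k]
    calc ∑ p : Fin n → Fin (K+1), ∏ m, (coef m (p m))^2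
        = ∑ p ∈ Fintype.piFinset (fun _ : Fin n => (univ : Finset (Fin (K+1)))),
            ∏ m, (coef m (p m))^2 := by rw [Fintype.piFinset_univ]
      _ = ∏ m, ∑ j : Fin (K+1), (coef m j)^2 :=
          (Finset.prod_univ_sum (fun _ : Fin n => (univ : Finset (Fin (K+1)))) (fun m j => (coef m j)^2)).symm
      _ = ∏ _m : Fin n, (Tr / 4^K) := by
          refine Finset.prod_congr rfl fun m _ => ?_
          rw [Finset.sum_congr rfl (fun j _ => hcoefsq m j), ← Finset.sum_div]
          congr 1
          rw [hTrdef, ← Finset.sum_range (fun j => ((K.choose j:ℝ))^2)]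
      _ = P := by rw [Finset.prod_const, Finset.card_univ, Fintype.card_fin, hPdef]
  obtain ⟨d, hd0, hdP⟩ := weyl_exists _ a z hz1 D hDmem P hPpos hdiag
  refine ⟨d, hd0, fun m => ?_⟩
  rw [← hSd d] at hdP
  rw [Complex.ofReal_re] at hdP
  set G : Fin n → ℝ := fun m' => (1 + s m' * Real.cos ((d:ℝ) * θ m'))/2 with hG
  have hG0 : ∀ m', 0 ≤ G m' := by
    intro m'
    simp only [hG]
    rcases hs m' with h|h <;> rw [h] <;>
      nlinarith [Real.cos_le_one ((d:ℝ)*θ m'), Real.neg_one_le_cos ((d:ℝ)*θ m')]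
  have hG1 : ∀ m', G m' ≤ 1 := by
    intro m'
    simp only [hG]
    rcases hs m' with h|h <;> rw [h] <;>
      nlinarith [Real.cos_le_one ((d:ℝ)*θ m'), Real.neg_one_le_cos ((d:ℝ)*θ m')]
  have hGm : ∏ m', (G m')^K ≤ (G m)^K := by
    have h2 : ∏ i ∈ Finset.univ.erase m, (G i)^K ≤ 1 :=
      Finset.prod_le_one (fun i _ => pow_nonneg (hG0 i) K)
        (fun i _ => pow_le_one₀ (hG0 i) (hG1 i))
    have h3 := Finset.mul_prod_erase Finset.univ (fun i => (G i)^K) (Finset.mem_univ m)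
    calc ∏ i, (G i)^K = (G m)^K * ∏ i ∈ Finset.univ.erase m, (G i)^K := h3.symm
      _ ≤ (G m)^K * 1 := mul_le_mul_of_nonneg_left h2 (pow_nonneg (hG0 m) K)
      _ = (G m)^K := mul_one _
  have hPlow : ((1:ℝ)/((K:ℝ)+1))^n ≤ P := by
    have hcs : (∑ j ∈ range (K+1), ((K.choose j:ℝ)))^2
        ≤ (#(range (K+1)) : ℝ) * ∑ j ∈ range (K+1), ((K.choose j:ℝ))^2 :=
      sq_sum_le_card_mul_sum_sq
    have hsumc : ∑ j ∈ range (K+1), ((K.choose j:ℝ)) = 2^K := by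
      rw [← Nat.cast_sum, Nat.sum_range_choose]
      push_cast; ring
    rw [hsumc, h2k, Finset.card_range] at hcs
    have hquot : (1:ℝ)/((K:ℝ)+1) ≤ Tr/4^K := by
      rw [div_le_div_iff₀ (by positivity) (by positivity)]
      push_cast at hcs
      nlinarith [hcs]
    rw [hPdef]
    exact pow_le_pow_left₀ (by positivity) hquot n
  have hrK : r^K < ((1:ℝ)/((K:ℝ)+1))^n / 2 := by
    have hKp : (0:ℝ) < ((K:ℝ)+1)^n := by positivity
    have heq : ((1:ℝ)/((K:ℝ)+1))^n / 2 = (1/2) / ((K:ℝ)+1)^n := by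
      rw [div_pow, one_pow]; ring
    rw [heq, lt_div_iff₀ hKp]
    nlinarith [hK]
  by_contra hcon
  push_neg at hcon
  have hle : (G m)^K ≤ r^K := pow_le_pow_left₀ (hG0 m) hcon K
  linarith [hGm, hdP, hPlow, hrK, hle]

/-- **Simultaneous near-diagonalization.** If `1, c₁, …, c_n` are linearly
independent over `ℚ` and `t ≤ n`, then for every `ε > 0` there are positive
integer separations `d₁, …, d_t` such that `|κ(dₗ, c_m) - δ_{ℓm}| < ε` for all
`ℓ ∈ {1,…,t}` and `m ∈ {1,…,n}`, where `δ_{ℓm}` is Kronecker's delta. -/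
theorem simultaneous_near_diagonalization (n t : ℕ) (htn : t ≤ n)
    (c : Fin n → ℝ)
    (hind : ∀ (q₀ : ℚ) (q : Fin n → ℚ),
      (q₀ : ℝ) + ∑ k, (q k : ℝ) * c k = 0 → q₀ = 0 ∧ ∀ k, q k = 0) :
    ∀ ε : ℝ, 0 < ε → ∃ d : Fin t → ℕ, (∀ ℓ, 0 < d ℓ) ∧
      ∀ (ℓ : Fin t) (m : Fin n),
        ‖kappa (d ℓ) (c m) - (if (ℓ : ℕ) = (m : ℕ) then 1 else 0)‖
          < ε := by
  intro ε hε
  set ε' : ℝ := min ε (1/2) with hε'def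
  have hε'0 : 0 < ε' := lt_min hε (by norm_num)
  have hε'2 : ε' ≤ 1/2 := min_le_right _ _
  have hε'1 : ε' ≤ ε := min_le_left _ _
  have H : ∀ ℓ : Fin t, ∃ dd : ℕ, 0 < dd ∧ ∀ m : Fin n, 1 - ε'^2 <
      (1 + (if (ℓ:ℕ) = (m:ℕ) then (1:ℝ) else -1)
        * Real.cos ((dd:ℝ) * (2*Real.pi * c m)))/2 := by
    intro ℓ
    exact key_step n c hind (fun m => if (ℓ:ℕ) = (m:ℕ) then (1:ℝ) else -1)
      (fun m => by by_cases h : (ℓ:ℕ)=(m:ℕ) <;> simp [h]) ε' hε'0 hε'2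
  choose d hd0 hdm using H
  refine ⟨d, hd0, fun ℓ m => ?_⟩
  have hGm := hdm ℓ m
  set x : ℝ := (d ℓ : ℝ) * (2 * Real.pi * c m) with hx
  have hexp : Complex.exp (2 * (Real.pi:ℂ) * Complex.I * ((d ℓ : ℕ):ℂ) * ((c m : ℝ):ℂ))
      = ((Real.cos x : ℝ):ℂ) + ((Real.sin x : ℝ):ℂ) * Complex.I := by
    rw [show (2 * (Real.pi:ℂ) * Complex.I * ((d ℓ : ℕ):ℂ) * ((c m : ℝ):ℂ))
        = ((x:ℝ):ℂ) * Complex.I by rw [hx]; push_cast; ring]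
    rw [Complex.exp_mul_I, Complex.ofReal_cos, Complex.ofReal_sin]
  have hpyth := Real.sin_sq_add_cos_sq x
  by_cases h : (ℓ:ℕ) = (m:ℕ)
  · rw [if_pos h]
    rw [if_pos h] at hGm
    have hv : kappa (d ℓ) (c m) - 1
        = ((((Real.cos x - 1)/2 : ℝ)):ℂ) + (((Real.sin x/2 : ℝ)):ℂ) * Complex.I := by
      rw [kappa, hexp]; push_cast; ring
    rw [hv, Complex.norm_def, Complex.normSq_add_mul_I, Real.sqrt_lt' hε]
    nlinarith [hGm, hε'1, hε'0, hε, hpyth]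
  · rw [if_neg h]
    rw [if_neg h] at hGm
    have hv : kappa (d ℓ) (c m) - 0
        = ((((1 + Real.cos x)/2 : ℝ)):ℂ) + (((Real.sin x/2 : ℝ)):ℂ) * Complex.I := by
      rw [kappa, hexp]; push_cast; ring
    rw [hv, Complex.norm_def, Complex.normSq_add_mul_I, Real.sqrt_lt' hε]
    nlinarith [hGm, hε'1, hε'0, hε, hpyth]
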